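/- arXiv:1503.04008 — 5 statements merged into one kernel-verified Lean document; each statement's English description precedes it below -/
import Mathlib

section
/- Let A, B, C be Young functions (convex, increasing, onto [0,∞), vanishing at 0) such that B^{-1}(t)·C^{-1}(t) ≤ κ·A^{-1}(t) for all t > 0. Then for all y, z ≥ 0, A(yz/κ) ≤ B(y) + C(z). -/
/-!
Put `t = B y + C z`. Since `B y ≤ t` and `C z ≤ t`, monotonicity gives `y ≤ B⁻¹ t` and
`z ≤ C⁻¹ t`, hence `y z / κ ≤ A⁻¹ t` by the hypothesis on the inverses, and applying the
monotone `A` yields `A (y z / κ) ≤ t`. The inverses are only available for `t > 0`, which holds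
unless `y = 0`, and then the left side is `A 0 = 0`.
-/

open Set

lemma MonotoneOn.apply_nonneg_of_Ici {f : ℝ → ℝ} (hf : MonotoneOn f (Ici 0)) (h0 : f 0 = 0)
    {x : ℝ} (hx : 0 ≤ x) : 0 ≤ f x :=
  h0 ▸ hf self_mem_Ici hx hx

lemma StrictMonoOn.apply_pos_of_Ici {f : ℝ → ℝ} (hf : StrictMonoOn f (Ici 0)) (h0 : f 0 = 0)
    {x : ℝ} (hx : 0 < x) : 0 < f x :=
  h0 ▸ hf self_mem_Ici hx.le hx

lemma apply_mul_div_le_of_inv_mul_inv_le {A B C Ainv Binv Cinv : ℝ → ℝ} {κ t y z : ℝ}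
    (hκ : 0 < κ) (hA : MonotoneOn A (Ici 0))
    (hB : StrictMonoOn B (Ici 0)) (hC : StrictMonoOn C (Ici 0))
    (hAinv : 0 ≤ Ainv t ∧ A (Ainv t) = t)
    (hBinv : 0 ≤ Binv t ∧ B (Binv t) = t)
    (hCinv : 0 ≤ Cinv t ∧ C (Cinv t) = t)
    (hprod : Binv t * Cinv t ≤ κ * Ainv t)
    (hy : 0 ≤ y) (hz : 0 ≤ z) (hyt : B y ≤ t) (hzt : C z ≤ t) :
    A (y * z / κ) ≤ t := by
  have hyB : y ≤ Binv t := (hB.le_iff_le hy hBinv.1).mp (hBinv.2.symm ▸ hyt)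
  have hzC : z ≤ Cinv t := (hC.le_iff_le hz hCinv.1).mp (hCinv.2.symm ▸ hzt)
  have hyzA : y * z / κ ≤ Ainv t := by
    rw [div_le_iff₀' hκ]
    exact (mul_le_mul hyB hzC hz hBinv.1).trans hprod
  calc A (y * z / κ) ≤ A (Ainv t) := hA (by positivity : (0 : ℝ) ≤ y * z / κ) hAinv.1 hyzA
    _ = t := hAinv.2

theorem young_triple_direct_general (A B C Ainv Binv Cinv : ℝ → ℝ) (κ : ℝ) (hκ : 0 < κ)
    (hA : StrictMonoOn A (Ici (0:ℝ))) (hA0 : A 0 = 0)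
    (hB : StrictMonoOn B (Ici (0:ℝ))) (hB0 : B 0 = 0)
    (hC : StrictMonoOn C (Ici (0:ℝ))) (hC0 : C 0 = 0)
    (hAinv : ∀ t > (0:ℝ), 0 ≤ Ainv t ∧ A (Ainv t) = t)
    (hBinv : ∀ t > (0:ℝ), 0 ≤ Binv t ∧ B (Binv t) = t)
    (hCinv : ∀ t > (0:ℝ), 0 ≤ Cinv t ∧ C (Cinv t) = t)
    (hprod : ∀ t > (0:ℝ), Binv t * Cinv t ≤ κ * Ainv t) :
    ∀ y z : ℝ, 0 ≤ y → 0 ≤ z → A (y * z / κ) ≤ B y + C z := by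
  intro y z hy hz
  have hBy : 0 ≤ B y := hB.monotoneOn.apply_nonneg_of_Ici hB0 hy
  have hCz : 0 ≤ C z := hC.monotoneOn.apply_nonneg_of_Ici hC0 hz
  rcases hy.eq_or_lt with rfl | hy0
  · simpa [hA0] using add_nonneg hBy hCz
  have ht : 0 < B y + C z := add_pos_of_pos_of_nonneg (hB.apply_pos_of_Ici hB0 hy0) hCz
  exact apply_mul_div_le_of_inv_mul_inv_le hκ hA.monotoneOn hB hC (hAinv _ ht) (hBinv _ ht)
    (hCinv _ ht) (hprod _ ht) hy hz (le_add_of_nonneg_right hCz) (le_add_of_nonneg_left hBy)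

/-- If `A, B, C` are Young functions (convex, increasing, onto `[0,∞)`, vanishing
at `0`) with `B⁻¹(t)·C⁻¹(t) ≤ κ·A⁻¹(t)` for all `t > 0`, then
`A(yz/κ) ≤ B(y) + C(z)` for all `y, z ≥ 0`. -/
theorem young_triple_direct (A B C Ainv Binv Cinv : ℝ → ℝ) (κ : ℝ) (hκ : 0 < κ)
    (hAconv : ConvexOn ℝ (Ici (0:ℝ)) A)
    (hBconv : ConvexOn ℝ (Ici (0:ℝ)) B)
    (hCconv : ConvexOn ℝ (Ici (0:ℝ)) C)
    (hA : StrictMonoOn A (Ici (0:ℝ))) (hA0 : A 0 = 0)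
    (hB : StrictMonoOn B (Ici (0:ℝ))) (hB0 : B 0 = 0)
    (hC : StrictMonoOn C (Ici (0:ℝ))) (hC0 : C 0 = 0)
    (hAsurj : Set.SurjOn A (Ici (0:ℝ)) (Ici (0:ℝ)))
    (hBsurj : Set.SurjOn B (Ici (0:ℝ)) (Ici (0:ℝ)))
    (hCsurj : Set.SurjOn C (Ici (0:ℝ)) (Ici (0:ℝ)))
    (hAinv : ∀ t > (0:ℝ), 0 ≤ Ainv t ∧ A (Ainv t) = t)
    (hBinv : ∀ t > (0:ℝ), 0 ≤ Binv t ∧ B (Binv t) = t)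
    (hCinv : ∀ t > (0:ℝ), 0 ≤ Cinv t ∧ C (Cinv t) = t)
    (hprod : ∀ t > (0:ℝ), Binv t * Cinv t ≤ κ * Ainv t) :
    ∀ y z : ℝ, 0 ≤ y → 0 ≤ z → A (y * z / κ) ≤ B y + C z :=
  young_triple_direct_general A B C Ainv Binv Cinv κ hκ hA hA0 hB hB0 hC hC0 hAinv hBinv hCinv hprod
end

section
/- Let B be a Young function with inverse B^{-1} and complementary function B̄ such that t ≤ B^{-1}(t)·B̄^{-1}(t) ≤ 2t for t > 0, and let 1 < p < ∞. Then ∫_{B^{-1}(a)}^∞ dB(t)/t^p ≤ ∫_{B̄^{-1}(a)}^∞ (t/B̄(t))^p dB̄(t) for every a > 0. -/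
open Set MeasureTheory ENNReal

/-!
If `g` is a right inverse of the distribution function `F` on `[a, ∞)`, then `g` is increasing
there, and the preimage under `g` of an interval `(c, d]` is, up to its endpoints, the interval
`(F (max c (g a)), F d]`. Hence `g` pushes Lebesgue measure on `(a, ∞)` forward to `dF` on
`(g a, ∞)`, and both sides of the estimate become integrals over `(a, ∞)` in the variable
`w = B (t) = B̄ (s)`. There the integrands compare pointwise, since `w ≤ B⁻¹(w) B̄⁻¹(w)`.
-/

theorem Monotone.strictMonoOn_of_leftInvOn {α β : Type*} [LinearOrder α] [Preorder β]
    {F : α → β} {g : β → α} {s : Set β} (hF : Monotone F) (hg : LeftInvOn F g s) :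
    StrictMonoOn g s := fun x hx y hy hxy =>
  lt_of_not_ge fun h => (hxy.trans_le (by simpa only [hg hx, hg hy] using hF h)).false

theorem one_div_rpow_le_div_rpow {x y w p : ℝ} (hx : 0 < x) (hw : 0 < w) (hp : 0 ≤ p)
    (h : w ≤ x * y) : 1 / x ^ p ≤ (y / w) ^ p := by
  rw [one_div, ← Real.inv_rpow hx.le]
  refine Real.rpow_le_rpow (inv_nonneg.2 hx.le) ?_ hp
  rw [inv_eq_one_div, div_le_div_iff₀ hx hw]
  linarith

namespace StieltjesFunction

variable (F : StieltjesFunction ℝ) {g : ℝ → ℝ} {a : ℝ}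

theorem volume_preimage_Ioc_inter_Ioi (hg : LeftInvOn F g (Ici a)) (c d : ℝ) :
    volume (g ⁻¹' Ioc c d ∩ Ioi a) = ENNReal.ofReal (F d - F (max c (g a))) := by
  set c' := max c (g a)
  have hga : F (g a) = a := hg self_mem_Ici
  have hsub : Ioo (F c') (F d) ⊆ g ⁻¹' Ioc c d ∩ Ioi a := by
    rintro w ⟨hcw, hwd⟩
    have haw : a < w := (hga ▸ F.mono (le_max_right c (g a))).trans_lt hcw
    have hw : F (g w) = w := hg (mem_Ici.2 haw.le)
    refine ⟨⟨?_, ?_⟩, haw⟩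
    · exact lt_of_not_ge fun h => hcw.not_ge (hw ▸ F.mono (h.trans (le_max_left _ _)))
    · exact le_of_not_gt fun h => hwd.not_ge (hw ▸ F.mono h.le)
  have hsup : g ⁻¹' Ioc c d ∩ Ioi a ⊆ Icc (F c') (F d) := by
    rintro w ⟨⟨hcw, hwd⟩, haw⟩
    have hw : F (g w) = w := hg (mem_Ici.2 haw.le)
    have hgaw : g a ≤ g w :=
      (F.mono.strictMonoOn_of_leftInvOn hg).monotoneOn self_mem_Ici (mem_Ici.2 haw.le) haw.le
    exact ⟨hw ▸ F.mono (max_le hcw.le hgaw), hw ▸ F.mono hwd⟩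
  refine le_antisymm ((measure_mono hsup).trans_eq Real.volume_Icc) ?_
  exact Real.volume_Ioo ▸ measure_mono hsub

theorem aemeasurable_of_leftInvOn (hg : LeftInvOn F g (Ici a)) :
    AEMeasurable g (volume.restrict (Ioi a)) :=
  aemeasurable_restrict_of_monotoneOn _root_.measurableSet_Ioi
    ((F.mono.strictMonoOn_of_leftInvOn hg).monotoneOn.mono Ioi_subset_Ici_self)

theorem map_restrict_Ioi_of_leftInvOn (hg : LeftInvOn F g (Ici a)) :
    (volume.restrict (Ioi a)).map g = F.measure.restrict (Ioi (g a)) := by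
  have hmap : ∀ c d, (volume.restrict (Ioi a)).map g (Ioc c d)
      = ENNReal.ofReal (F d - F (max c (g a))) := fun c d => by
    rw [Measure.map_apply_of_aemeasurable (F.aemeasurable_of_leftInvOn hg) measurableSet_Ioc,
      Measure.restrict_apply' _root_.measurableSet_Ioi, F.volume_preimage_Ioc_inter_Ioi hg]
  refine Measure.ext_of_Ioc' _ _ (fun c d _ => hmap c d ▸ ofReal_ne_top) fun c d _ => ?_
  rw [hmap, Measure.restrict_apply measurableSet_Ioc, Ioc_inter_Ioi, F.measure_Ioc]

theorem setLIntegral_Ioi_of_leftInvOn (hg : LeftInvOn F g (Ici a)) {f : ℝ → ℝ≥0∞}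
    (hf : Measurable f) :
    ∫⁻ t in Ioi (g a), f t ∂F.measure = ∫⁻ w in Ioi a, f (g w) := by
  rw [← F.map_restrict_Ioi_of_leftInvOn hg,
    lintegral_map' hf.aemeasurable (F.aemeasurable_of_leftInvOn hg)]

end StieltjesFunction

theorem stieltjes_tail_estimate_general (B Bbar : StieltjesFunction ℝ)
    (Binv Bbarinv : ℝ → ℝ) (p : ℝ) (hp : 1 < p)
    (hBinv : ∀ t > (0:ℝ), 0 < Binv t ∧ B (Binv t) = t)
    (hBbarinv : ∀ t > (0:ℝ), 0 < Bbarinv t ∧ Bbar (Bbarinv t) = t)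
    (hinvprod : ∀ t > (0:ℝ), t ≤ Binv t * Bbarinv t ∧ Binv t * Bbarinv t ≤ 2 * t)
    (a : ℝ) (ha : 0 < a) :
    (∫⁻ t in Ioi (Binv a), ENNReal.ofReal (1 / t ^ p) ∂B.measure) ≤
      ∫⁻ t in Ioi (Bbarinv a), ENNReal.ofReal ((t / Bbar t) ^ p) ∂Bbar.measure := by
  have hB : LeftInvOn B Binv (Ici a) := fun t ht => (hBinv t (ha.trans_le ht)).2
  have hBbar : LeftInvOn Bbar Bbarinv (Ici a) := fun t ht => (hBbarinv t (ha.trans_le ht)).2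
  have hf : Measurable fun t : ℝ => ENNReal.ofReal ((t / Bbar t) ^ p) :=
    ((measurable_id.div Bbar.mono.measurable).pow_const p).ennreal_ofReal
  rw [B.setLIntegral_Ioi_of_leftInvOn hB (by fun_prop),
    Bbar.setLIntegral_Ioi_of_leftInvOn hBbar hf]
  refine setLIntegral_mono' measurableSet_Ioi fun w hw => ?_
  have hw0 : 0 < w := ha.trans hw
  rw [hBbar (mem_Ici.2 hw.le)]
  exact ENNReal.ofReal_le_ofReal <| one_div_rpow_le_div_rpow (hBinv w hw0).1 hw0
    (zero_le_one.trans hp.le) (hinvprod w hw0).1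

/-- Key change-of-variable estimate between a Young function `B` and its complementary
function `B̄`: for every `a > 0` and `1 < p < ∞`,
`∫_{B⁻¹(a)}^∞ dB(t)/t^p ≤ ∫_{B̄⁻¹(a)}^∞ (t/B̄(t))^p dB̄(t)`. -/
theorem stieltjes_tail_estimate (B Bbar : StieltjesFunction ℝ)
    (Binv Bbarinv : ℝ → ℝ) (p : ℝ) (hp : 1 < p)
    (hBconv : ConvexOn ℝ (Ici (0:ℝ)) B)
    (hB0 : B 0 = 0)
    (hBbarcompl : ∀ s ≥ (0:ℝ),
      IsLUB {x : ℝ | ∃ t : ℝ, 0 < t ∧ x = s * t - B t} (Bbar s))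
    (hBbarquot : MonotoneOn (fun t : ℝ => Bbar t / t) (Ioi (0:ℝ)))
    (hBinv : ∀ t > (0:ℝ), 0 < Binv t ∧ B (Binv t) = t)
    (hBbarinv : ∀ t > (0:ℝ), 0 < Bbarinv t ∧ Bbar (Bbarinv t) = t)
    (hinvprod : ∀ t > (0:ℝ), t ≤ Binv t * Bbarinv t ∧ Binv t * Bbarinv t ≤ 2 * t)
    (a : ℝ) (ha : 0 < a) :
    (∫⁻ t in Ioi (Binv a), ENNReal.ofReal (1 / t ^ p) ∂B.measure) ≤
      ∫⁻ t in Ioi (Bbarinv a), ENNReal.ofReal ((t / Bbar t) ^ p) ∂Bbar.measure :=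
  stieltjes_tail_estimate_general B Bbar Binv Bbarinv p hp hBinv hBbarinv hinvprod a ha
end

section
/- If w₁ and w₂ are A₁ weights on ℝⁿ and 1 < p < ∞, then w = w₁·w₂^{1−p} is an A_p weight with [w]_{A_p} ≤ [w₁]_{A₁}·[w₂]_{A₁}^{p−1}. -/
open Set MeasureTheory ENNReal

/-- A cube in `ℝⁿ` with lower-left corner `a` and side length `r`. -/
def cube {n : ℕ} (a : Fin n → ℝ) (r : ℝ) : Set (Fin n → ℝ) :=
  {x | ∀ i, a i ≤ x i ∧ x i ≤ a i + r}

/-- Average of an `ℝ≥0∞`-valued weight over a set. -/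
noncomputable def cubeAvg {n : ℕ} (Q : Set (Fin n → ℝ)) (w : (Fin n → ℝ) → ℝ≥0∞) : ℝ≥0∞ :=
  (∫⁻ x in Q, w x) / volume Q

/-! On a cube with averages `A₁`, `A₂` of `w₁`, `w₂`, the hypotheses say `Aᵢ ≤ cᵢ wᵢ` a.e.
Pointwise this gives `w₂^{1-p} A₂^{p-1} ≤ c₂^{p-1}`, and, since `w^{1/(1-p)} = w₁^{-1/(p-1)} w₂`,
also `w^{1/(1-p)} A₁^{1/(p-1)} ≤ c₁^{1/(p-1)} w₂`. Averaging,
`avg w · A₂^{p-1} ≤ A₁ c₂^{p-1}` and `(avg w^{1/(1-p)})^{p-1} A₁ ≤ c₁ A₂^{p-1}`, and multiplying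
the two and cancelling `A₁ A₂^{p-1}` gives the bound. In `ℝ≥0∞` the pointwise bounds hold
for all values, and the cancellation fails only when `A₁ = 0`, or `A₂ = ∞` with `c₂ < ∞`;
in both cases `avg w = 0`. -/

namespace ENNReal

theorem rpow_neg_mul_rpow_le {a c x : ℝ≥0∞} {s : ℝ} (hs : 0 ≤ s) (h : a ≤ c * x) :
    x ^ (-s) * a ^ s ≤ c ^ s := by
  rw [rpow_neg, ← inv_rpow, ← mul_rpow_of_nonneg _ _ hs, mul_comm, ← div_eq_mul_inv]
  exact rpow_le_rpow (div_le_of_le_mul h) hs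

theorem mul_rpow_neg_rpow_inv_mul_rpow_le {a c x y : ℝ≥0∞} {s : ℝ} (hs : 0 < s)
    (h : a ≤ c * x) : (x * y ^ (-s)) ^ (-s⁻¹) * a ^ s⁻¹ ≤ y * c ^ s⁻¹ := by
  have ht : 0 < s⁻¹ := inv_pos.mpr hs
  by_cases ha : a = 0
  · simp [ha, zero_rpow_of_pos ht]
  have hx0 : x ≠ 0 := by rintro rfl; simp_all
  have hc0 : c ≠ 0 := by rintro rfl; simp_all
  rcases eq_or_ne y ⊤ with rfl | hy
  · simp [top_mul, rpow_eq_zero_iff, hc0, ht.not_gt]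
  have hys : y ^ (-s) ≠ 0 := by simp [rpow_eq_zero_iff, hy, hs.le]
  rw [mul_rpow_of_ne_zero hx0 hys, ← rpow_mul, neg_mul_neg, mul_inv_cancel₀ hs.ne', rpow_one,
    mul_right_comm, mul_comm]
  exact mul_le_mul_right (rpow_neg_mul_rpow_le ht.le h) y

theorem mul_le_mul_of_cross_mul_le {x y a b c d : ℝ≥0∞} (hx : x * a ≤ b * c)
    (hy : y * b ≤ a * d) (hb : b ≠ 0) (hac : a = ⊤ → c = ⊤) : x * y ≤ d * c := by
  rcases eq_or_ne a 0 with rfl | ha0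
  · simp_all
  rcases eq_or_ne d 0 with rfl | hd0
  · simp_all
  rcases eq_or_ne c ⊤ with rfl | hc
  · simp_all
  have ha : a ≠ ⊤ := fun h => hc (hac h)
  rcases eq_or_ne b ⊤ with rfl | hbt
  · rcases eq_or_ne y 0 with rfl | hy0
    · simp
    rcases eq_or_ne c 0 with rfl | hc0
    · simp_all
    have hd : d = ⊤ := by simp_all [mul_eq_top]
    simp [hd, hc0]
  rw [← ENNReal.mul_le_mul_iff_left (mul_ne_zero ha0 hb) (mul_ne_top ha hbt)]
  calc x * y * (a * b) = (x * a) * (y * b) := by ring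
    _ ≤ (b * c) * (a * d) := by gcongr
    _ = d * c * (a * b) := by ring

end ENNReal

theorem cubeAvg_mul_le_of_ae_mul_le {n : ℕ} {Q : Set (Fin n → ℝ)}
    {f g : (Fin n → ℝ) → ℝ≥0∞} {C D : ℝ≥0∞} (hg : AEMeasurable g (volume.restrict Q))
    (h : ∀ᵐ x ∂(volume.restrict Q), f x * C ≤ g x * D) :
    cubeAvg Q f * C ≤ cubeAvg Q g * D := by
  simp only [cubeAvg, ← ENNReal.mul_div_right_comm, ← lintegral_mul_const'' D hg]
  exact ENNReal.div_le_div_right ((lintegral_mul_const_le C f).trans (lintegral_mono_ae h)) _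

/-- Easy half of the factorization theorem: if `w₁, w₂ ∈ A₁`, then
`w = w₁ · w₂^{1-p} ∈ A_p` with `[w]_{A_p} ≤ [w₁]_{A₁} [w₂]_{A₁}^{p-1}`. -/
theorem a1_factorization {n : ℕ} (p : ℝ) (hp : 1 < p)
    (w₁ w₂ : (Fin n → ℝ) → ℝ≥0∞) (hw₁ : Measurable w₁) (hw₂ : Measurable w₂)
    (c₁ c₂ : ℝ≥0∞)
    -- `[w₁]_{A₁} ≤ c₁` : on each cube, the average of `w₁` is a.e. bounded by `c₁ w₁`
    (h₁ : ∀ (a : Fin n → ℝ) (r : ℝ), 0 < r →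
      ∀ᵐ x ∂(volume.restrict (cube a r)), cubeAvg (cube a r) w₁ ≤ c₁ * w₁ x)
    (h₂ : ∀ (a : Fin n → ℝ) (r : ℝ), 0 < r →
      ∀ᵐ x ∂(volume.restrict (cube a r)), cubeAvg (cube a r) w₂ ≤ c₂ * w₂ x) :
    ∀ (a : Fin n → ℝ) (r : ℝ), 0 < r →
      cubeAvg (cube a r) (fun x => w₁ x * w₂ x ^ (1 - p)) *
        (cubeAvg (cube a r) (fun x => (w₁ x * w₂ x ^ (1 - p)) ^ (1 / (1 - p)))) ^ (p - 1)
      ≤ c₁ * c₂ ^ (p - 1) := by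
  intro a r hr
  have hs : 0 < p - 1 := sub_pos.mpr hp
  rw [show 1 - p = -(p - 1) by ring, one_div, inv_neg]
  generalize p - 1 = s at hs ⊢
  set Q := cube a r
  set A₁ := cubeAvg Q w₁
  set A₂ := cubeAvg Q w₂
  set X := cubeAvg Q fun x => w₁ x * w₂ x ^ (-s)
  set Y := cubeAvg Q fun x => (w₁ x * w₂ x ^ (-s)) ^ (-s⁻¹)
  have hX : X * A₂ ^ s ≤ A₁ * c₂ ^ s := by
    refine cubeAvg_mul_le_of_ae_mul_le hw₁.aemeasurable ?_
    filter_upwards [h₂ a r hr] with x hx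
    rw [mul_assoc]
    exact mul_le_mul_right (rpow_neg_mul_rpow_le hs.le hx) _
  have hY : Y ^ s * A₁ ≤ A₂ ^ s * c₁ := by
    have hY' : Y * A₁ ^ s⁻¹ ≤ A₂ * c₁ ^ s⁻¹ :=
      cubeAvg_mul_le_of_ae_mul_le hw₂.aemeasurable <| by
        filter_upwards [h₁ a r hr] with x hx
        exact mul_rpow_neg_rpow_inv_mul_rpow_le hs hx
    simpa [mul_rpow_of_nonneg _ _ hs.le, rpow_inv_rpow hs.ne'] using rpow_le_rpow hY' hs.le
  by_cases hA₁ : A₁ = 0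
  · have hX0 : X * 1 ≤ A₁ * ⊤ :=
      cubeAvg_mul_le_of_ae_mul_le hw₁.aemeasurable (ae_of_all _ fun x => by
        simpa using mul_le_mul_right le_top _)
    rw [show X = 0 by simpa [hA₁] using hX0, zero_mul]
    exact zero_le
  by_cases hA₂ : A₂ = ⊤ ∧ c₂ ≠ ⊤
  · have hX0 : X * 1 ≤ A₁ * 0 := by
      refine cubeAvg_mul_le_of_ae_mul_le hw₁.aemeasurable ?_
      filter_upwards [h₂ a r hr] with x hx
      have hw₂x : w₂ x = ⊤ :=
        ((mul_eq_top.mp (top_le_iff.mp (hA₂.1 ▸ hx))).resolve_right fun h => hA₂.2 h.1).2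
      simp [hw₂x, top_rpow_of_neg (neg_neg_of_pos hs)]
    rw [show X = 0 by simpa using hX0, zero_mul]
    exact zero_le
  refine mul_le_mul_of_cross_mul_le hX hY hA₁ fun hA₂s => ?_
  have hA₂t : A₂ = ⊤ := by simpa [rpow_eq_top_iff, hs, hs.not_gt] using hA₂s
  simp [not_and_not_right.mp hA₂ hA₂t, top_rpow_of_pos hs]
end

section
/- Let w be a weight on ℝⁿ and 𝒮 a sparse family of dyadic cubes. Then for every cube R in the dyadic grid, Σ_{Q∈𝒮, Q⊆R} w(Q) ≤ 2·[w]_{A_∞}·w(R), where [w]_{A_∞} = sup_Q (1/w(Q)) ∫_Q M(w·χ_Q) dx. -/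
open Set MeasureTheory ENNReal

/-- The (uncentered, over cubes) Hardy–Littlewood maximal function of a weight `w`. -/
noncomputable def maximalFn {n : ℕ} (w : (Fin n → ℝ) → ℝ≥0∞) (x : Fin n → ℝ) : ℝ≥0∞ :=
  ⨆ (a : Fin n → ℝ) (r : ℝ) (_ : 0 < r) (_ : x ∈ cube a r),
    (∫⁻ y in cube a r, w y) / volume (cube a r)

lemma cube_eq_pi {n : ℕ} (a : Fin n → ℝ) (r : ℝ) :
    cube a r = univ.pi fun i => Icc (a i) (a i + r) := by
  ext x; simp [cube, Pi.le_def, forall_and]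

lemma measurableSet_cube {n : ℕ} (a : Fin n → ℝ) (r : ℝ) : MeasurableSet (cube a r) := by
  rw [cube_eq_pi]; exact MeasurableSet.univ_pi fun _ => measurableSet_Icc

lemma volume_cube {n : ℕ} (a : Fin n → ℝ) (r : ℝ) :
    volume (cube a r) = ENNReal.ofReal r ^ n := by
  rw [cube_eq_pi, volume_pi_pi]
  simp [Real.volume_Icc]

lemma volume_cube_pos {n : ℕ} (a : Fin n → ℝ) {r : ℝ} (hr : 0 < r) :
    0 < volume (cube a r) := by
  rw [volume_cube]; exact ENNReal.pow_pos (ENNReal.ofReal_pos.mpr hr) n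

lemma volume_cube_ne_top {n : ℕ} (a : Fin n → ℝ) (r : ℝ) : volume (cube a r) ≠ ∞ := by
  rw [volume_cube]; exact ENNReal.pow_ne_top ENNReal.ofReal_ne_top

lemma setLIntegral_cube_div_volume_le_maximalFn {n : ℕ} (w : (Fin n → ℝ) → ℝ≥0∞)
    {a : Fin n → ℝ} {r : ℝ} (hr : 0 < r) {x : Fin n → ℝ} (hx : x ∈ cube a r) :
    (∫⁻ y in cube a r, w y) / volume (cube a r) ≤ maximalFn w x :=
  le_iSup₂_of_le (f := fun a r => ⨆ (_ : 0 < r) (_ : x ∈ cube a r),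
    (∫⁻ y in cube a r, w y) / volume (cube a r)) a r (le_iSup₂_of_le hr hx le_rfl)

lemma setLIntegral_cube_le_mul_setLIntegral_maximalFn {n : ℕ} (w : (Fin n → ℝ) → ℝ≥0∞)
    {a : Fin n → ℝ} {r : ℝ} (hr : 0 < r) {E : Set (Fin n → ℝ)} (hE : MeasurableSet E)
    (hEQ : E ⊆ cube a r) {c : ℝ≥0∞} (hc : volume (cube a r) ≤ c * volume E) :
    ∫⁻ x in cube a r, w x ≤ c * ∫⁻ x in E, maximalFn w x := by
  set avg := (∫⁻ y in cube a r, w y) / volume (cube a r)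
  calc ∫⁻ x in cube a r, w x
      = avg * volume (cube a r) :=
        (ENNReal.div_mul_cancel (volume_cube_pos a hr).ne' (volume_cube_ne_top a r)).symm
    _ ≤ avg * (c * volume E) := by gcongr
    _ = c * ∫⁻ _ in E, avg := by rw [setLIntegral_const]; ring
    _ ≤ c * ∫⁻ x in E, maximalFn w x :=
        mul_le_mul_right (setLIntegral_mono' hE fun x hx =>
          setLIntegral_cube_div_volume_le_maximalFn w hr (hEQ hx)) c

lemma tsum_setLIntegral_le_of_pairwise_disjoint {α ι : Type*} [MeasurableSpace α] [Countable ι]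
    {μ : Measure α} {E : ι → Set α} (hE : ∀ i, MeasurableSet (E i))
    (hdisj : Pairwise (Function.onFun Disjoint E)) {R : Set α} (hER : ∀ i, E i ⊆ R)
    (f : α → ℝ≥0∞) :
    ∑' i, ∫⁻ x in E i, f x ∂μ ≤ ∫⁻ x in R, f x ∂μ := by
  rw [← lintegral_iUnion hE hdisj]
  exact lintegral_mono_set (iUnion_subset hER)

theorem sparse_carleson_general {n : ℕ} {ι : Type*} [Countable ι]
    (w : (Fin n → ℝ) → ℝ≥0∞)
    -- the sparse family: cubes `cube (a i) (r i)` with sparseness witnesses `E i`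
    (a : ι → Fin n → ℝ) (r : ι → ℝ) (hr : ∀ i, 0 < r i)
    (E : ι → Set (Fin n → ℝ)) (hEmeas : ∀ i, MeasurableSet (E i))
    (hEsub : ∀ i, E i ⊆ cube (a i) (r i))
    (hEsparse : ∀ i, volume (cube (a i) (r i)) ≤ 2 * volume (E i))
    (hEdisj : Pairwise (Function.onFun Disjoint E))
    -- `[w]_{A∞} ≤ cA` : the Fujii–Wilson condition on every cube
    (cA : ℝ≥0∞)
    (hAinf : ∀ (b : Fin n → ℝ) (s : ℝ), 0 < s →
      (∫⁻ x in cube b s, maximalFn (fun y => (cube b s).indicator w y) x) ≤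
        cA * ∫⁻ x in cube b s, w x)
    (b : Fin n → ℝ) (s : ℝ) (hs : 0 < s) :
    (∑' i : ι, {i : ι | cube (a i) (r i) ⊆ cube b s}.indicator
        (fun i => ∫⁻ x in cube (a i) (r i), w x) i)
      ≤ 2 * cA * ∫⁻ x in cube b s, w x := by
  set R := cube b s
  set S := {i : ι | cube (a i) (r i) ⊆ R}
  set Mw := maximalFn fun y => R.indicator w y
  have hQ : ∀ i : S, ∫⁻ x in cube (a i) (r i), w x ≤ 2 * ∫⁻ x in E i, Mw x := fun i =>
    calc ∫⁻ x in cube (a i) (r i), w x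
        = ∫⁻ x in cube (a i) (r i), R.indicator w x :=
          setLIntegral_congr_fun (measurableSet_cube _ _) fun y hy =>
            (indicator_of_mem (i.2 hy) w).symm
      _ ≤ 2 * ∫⁻ x in E i, Mw x :=
          setLIntegral_cube_le_mul_setLIntegral_maximalFn _ (hr i) (hEmeas i) (hEsub i)
            (hEsparse i)
  have hE : ∑' i : S, ∫⁻ x in E i, Mw x ≤ ∫⁻ x in R, Mw x :=
    tsum_setLIntegral_le_of_pairwise_disjoint (E := fun i : S => E i) (fun i => hEmeas i)
      (hEdisj.comp_of_injective Subtype.val_injective) (fun i => (hEsub i).trans i.2) Mw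
  rw [← tsum_subtype, mul_assoc]
  calc ∑' i : S, ∫⁻ x in cube (a i) (r i), w x
      ≤ ∑' i : S, 2 * ∫⁻ x in E i, Mw x := ENNReal.tsum_le_tsum hQ
    _ = 2 * ∑' i : S, ∫⁻ x in E i, Mw x := ENNReal.tsum_mul_left
    _ ≤ 2 * (cA * ∫⁻ x in R, w x) := by gcongr; exact hE.trans (hAinf b s hs)

/-- The Carleson property of a sparse family: if `𝒮 = {Q i}` is a sparse family of
cubes (each `Q i` contains a measurable `E i` with `|Q i| ≤ 2 |E i|`, the `E i`
pairwise disjoint), and `w` has Fujii–Wilson constant at most `cA`, then for every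
cube `R`, `∑_{Q ∈ 𝒮, Q ⊆ R} w(Q) ≤ 2 cA w(R)`. -/
theorem sparse_carleson {n : ℕ} {ι : Type*} [Countable ι]
    (w : (Fin n → ℝ) → ℝ≥0∞) (hw : Measurable w)
    -- the sparse family: cubes `cube (a i) (r i)` with sparseness witnesses `E i`
    (a : ι → Fin n → ℝ) (r : ι → ℝ) (hr : ∀ i, 0 < r i)
    (E : ι → Set (Fin n → ℝ)) (hEmeas : ∀ i, MeasurableSet (E i))
    (hEsub : ∀ i, E i ⊆ cube (a i) (r i))
    (hEsparse : ∀ i, volume (cube (a i) (r i)) ≤ 2 * volume (E i))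
    (hEdisj : Pairwise (Function.onFun Disjoint E))
    -- `[w]_{A∞} ≤ cA` : the Fujii–Wilson condition on every cube
    (cA : ℝ≥0∞)
    (hAinf : ∀ (b : Fin n → ℝ) (s : ℝ), 0 < s →
      (∫⁻ x in cube b s, maximalFn (fun y => (cube b s).indicator w y) x) ≤
        cA * ∫⁻ x in cube b s, w x)
    (b : Fin n → ℝ) (s : ℝ) (hs : 0 < s) :
    (∑' i : ι, {i : ι | cube (a i) (r i) ⊆ cube b s}.indicator
        (fun i => ∫⁻ x in cube (a i) (r i), w x) i)
      ≤ 2 * cA * ∫⁻ x in cube b s, w x :=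
  sparse_carleson_general w a r hr E hEmeas hEsub hEsparse hEdisj cA hAinf b s hs
end

section
/- Dyadic Carleson embedding: let 𝒟 be a dyadic grid, w a weight, and (a_Q)_{Q∈𝒟} nonnegative numbers satisfying Σ_{Q⊆R, Q∈𝒟} a_Q ≤ K·w(R) for all R ∈ 𝒟. Then for every g ∈ L²(w), Σ_{Q∈𝒟} a_Q·((1/w(Q))∫_Q g·w dx)² ≤ 4K·‖g‖²_{L²(w)}. -/
open Set MeasureTheory ENNReal

/-- The standard dyadic cube of generation `k` indexed by `m ∈ ℤⁿ`. -/
def dyadicCube {n : ℕ} (k : ℤ) (m : Fin n → ℤ) : Set (Fin n → ℝ) :=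
  {x | ∀ i, (m i : ℝ) * (2:ℝ) ^ k ≤ x i ∧ x i < ((m i : ℝ) + 1) * (2:ℝ) ^ k}

/-!
Grouping the cubes of a finite family under its maximal cubes turns the packing condition into
`∑_{Q ∈ L} a_Q ≤ K w(⋃ L)` and the definition of the averages into the weak bound
`t w(⋃ L) ≤ ∫_{⋃ L} g dw` whenever `⟨g⟩_Q > t` for all `Q ∈ L`. For a finite family, let `M` be
the maximal function `M = max_Q ⟨g⟩_Q 1_Q`; then `{M > t}` is the union of the cubes with
`⟨g⟩_Q > t`, so by the layer-cake formula the first bound gives `∑ a_Q ⟨g⟩_Q² ≤ K ∫ M² dw`, and the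
second gives Doob's inequality `∫ M² dw ≤ 2 ∫ g M dw ≤ ½ ∫ M² dw + 2 ∫ g² dw`. As `∫ M² dw` is
finite, `∫ M² dw ≤ 4 ∫ g² dw`.
-/

def IsLaminar {ι α : Type*} (Q : ι → Set α) : Prop :=
  ∀ i j, Q i ⊆ Q j ∨ Q j ⊆ Q i ∨ Disjoint (Q i) (Q j)

section Dyadic

variable {n : ℕ}

theorem mem_dyadicCube_iff {k : ℤ} {m : Fin n → ℤ} {x : Fin n → ℝ} :
    x ∈ dyadicCube k m ↔ ∀ i, ⌊x i / 2 ^ k⌋ = m i := by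
  have h2k : (0:ℝ) < 2 ^ k := by positivity
  simp only [dyadicCube, mem_ofPred_eq, Int.floor_eq_iff, le_div_iff₀ h2k, div_lt_iff₀ h2k]

theorem measurableSet_dyadicCube (k : ℤ) (m : Fin n → ℤ) : MeasurableSet (dyadicCube k m) := by
  simp only [dyadicCube, ofPred_forall]
  exact MeasurableSet.iInter fun i =>
    (measurableSet_le measurable_const (measurable_pi_apply i)).inter
      (measurableSet_lt (measurable_pi_apply i) measurable_const)

theorem floor_div_two_zpow_of_le {k k' : ℤ} (h : k ≤ k') (r : ℝ) :
    ⌊r / 2 ^ k'⌋ = ⌊r / 2 ^ k⌋ / ((2 ^ (k' - k).toNat : ℕ) : ℤ) := by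
  rw [← Int.floor_div_natCast, div_div, Nat.cast_pow, Nat.cast_ofNat, ← zpow_natCast,
    Int.toNat_of_nonneg (by omega), ← zpow_add₀ two_ne_zero, add_sub_cancel]

theorem dyadicCube_subset_or_disjoint {k k' : ℤ} (h : k ≤ k') (m m' : Fin n → ℤ) :
    dyadicCube k m ⊆ dyadicCube k' m' ∨ Disjoint (dyadicCube k m) (dyadicCube k' m') := by
  have key : ∀ x ∈ dyadicCube k m,
      x ∈ dyadicCube k' m' ↔ ∀ i, m i / ((2 ^ (k' - k).toNat : ℕ) : ℤ) = m' i := by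
    intro x hx
    rw [mem_dyadicCube_iff] at hx ⊢
    simp only [floor_div_two_zpow_of_le h, hx]
  by_cases hm : ∀ i, m i / ((2 ^ (k' - k).toNat : ℕ) : ℤ) = m' i
  · exact .inl fun x hx => (key x hx).2 hm
  · exact .inr (disjoint_left.2 fun x hx hx' => hm ((key x hx).1 hx'))

theorem isLaminar_dyadicCube : IsLaminar fun q : ℤ × (Fin n → ℤ) => dyadicCube q.1 q.2 := by
  intro ⟨k, m⟩ ⟨k', m'⟩
  rcases le_total k k' with h | h
  · rcases dyadicCube_subset_or_disjoint h m m' with h' | h' <;> simp [h']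
  · rcases dyadicCube_subset_or_disjoint h m' m with h' | h'
    · simp [h']
    · simp [h'.symm]

end Dyadic

namespace IsLaminar

variable {ι α : Type*} {Q : ι → Set α}

theorem exists_pairwiseDisjoint_cover (hQ : IsLaminar Q) (L : Finset ι) :
    ∃ D ⊆ L.image Q, (D : Set (Set α)).PairwiseDisjoint id ∧ (∀ i ∈ L, ∃ d ∈ D, Q i ⊆ d) ∧
      ⋃ d ∈ D, d = ⋃ i ∈ L, Q i := by
  classical
  set D := (L.image Q).filter fun s => ∀ j ∈ L, s ⊆ Q j → Q j ⊆ s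
  have hcover : ∀ i ∈ L, ∃ d ∈ D, Q i ⊆ d := by
    intro i hi
    obtain ⟨d, hd⟩ := Finset.exists_maximal
      (⟨Q i, Finset.mem_image_of_mem Q (Finset.mem_filter.2 ⟨hi, subset_rfl⟩)⟩ :
        ((L.filter fun j => Q i ⊆ Q j).image Q).Nonempty)
    obtain ⟨j, hj, rfl⟩ := Finset.mem_image.1 hd.1
    obtain ⟨hjL, hij⟩ := Finset.mem_filter.1 hj
    refine ⟨Q j, Finset.mem_filter.2 ⟨Finset.mem_image_of_mem Q hjL, fun j' hj' hjj' => ?_⟩, hij⟩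
    exact hd.2 (Finset.mem_image_of_mem Q (Finset.mem_filter.2 ⟨hj', hij.trans hjj'⟩)) hjj'
  refine ⟨D, Finset.filter_subset _ _, ?_, hcover, ?_⟩
  · intro d hd d' hd' hne
    simp only [D, Finset.coe_filter, Finset.mem_image, mem_ofPred_eq] at hd hd'
    obtain ⟨⟨j, hj, rfl⟩, hmax⟩ := hd
    obtain ⟨⟨j', hj', rfl⟩, hmax'⟩ := hd'
    rcases hQ j j' with h | h | h
    · exact absurd (h.antisymm (hmax j' hj' h)) hne
    · exact absurd ((hmax' j hj h).antisymm h) hne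
    · exact h
  · refine subset_antisymm (iUnion₂_subset fun d hd => ?_) (iUnion₂_subset fun i hi => ?_)
    · obtain ⟨j, hj, rfl⟩ := Finset.mem_image.1 (Finset.filter_subset _ _ hd)
      exact subset_biUnion_of_mem (u := Q) hj
    · obtain ⟨d, hd, hsub⟩ := hcover i hi
      exact hsub.trans (subset_biUnion_of_mem (u := id) hd)

variable [MeasurableSpace α] {μ : Measure α}

theorem sum_le_mul_measure_biUnion (hQ : IsLaminar Q) (hmeas : ∀ i, MeasurableSet (Q i))
    {A : ι → ℝ≥0∞} {K : ℝ≥0∞}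
    (hA : ∀ i, ∑' j, {j | Q j ⊆ Q i}.indicator A j ≤ K * μ (Q i)) (L : Finset ι) :
    ∑ i ∈ L, A i ≤ K * μ (⋃ i ∈ L, Q i) := by
  classical
  obtain ⟨D, hDL, hdisj, hcover, hunion⟩ := hQ.exists_pairwiseDisjoint_cover L
  have hpacking : ∀ d ∈ D, ∑ i ∈ L.filter (Q · ⊆ d), A i ≤ K * μ d := by
    intro d hd
    obtain ⟨j, -, rfl⟩ := Finset.mem_image.1 (hDL hd)
    calc ∑ i ∈ L.filter (Q · ⊆ Q j), A i
        = ∑ i ∈ L.filter (Q · ⊆ Q j), {i | Q i ⊆ Q j}.indicator A i :=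
          Finset.sum_congr rfl fun i hi => (indicator_of_mem (Finset.mem_filter.1 hi).2 A).symm
      _ ≤ ∑' i, {i | Q i ⊆ Q j}.indicator A i := ENNReal.sum_le_tsum _
      _ ≤ K * μ (Q j) := hA j
  calc ∑ i ∈ L, A i ≤ ∑ i ∈ L, ∑ d ∈ D, if Q i ⊆ d then A i else 0 := by
        refine Finset.sum_le_sum fun i hi => ?_
        obtain ⟨d, hd, hsub⟩ := hcover i hi
        exact (if_pos hsub).symm.le.trans
          (Finset.single_le_sum (f := fun d => if Q i ⊆ d then A i else 0) (fun _ _ => zero_le) hd)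
    _ = ∑ d ∈ D, ∑ i ∈ L.filter (Q · ⊆ d), A i := by
        rw [Finset.sum_comm]
        simp only [Finset.sum_filter]
    _ ≤ ∑ d ∈ D, K * μ d := Finset.sum_le_sum hpacking
    _ = K * μ (⋃ i ∈ L, Q i) := by
        rw [← Finset.mul_sum, ← hunion,
          measure_biUnion_finset (f := fun d => d) hdisj fun d hd => ?_]
        obtain ⟨j, -, rfl⟩ := Finset.mem_image.1 (hDL hd)
        exact hmeas j

theorem mul_measure_biUnion_le (hQ : IsLaminar Q) (hmeas : ∀ i, MeasurableSet (Q i))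
    {g : α → ℝ≥0∞} {b : ℝ≥0∞} {L : Finset ι}
    (hL : ∀ i ∈ L, b * μ (Q i) ≤ ∫⁻ x in Q i, g x ∂μ) :
    b * μ (⋃ i ∈ L, Q i) ≤ ∫⁻ x in ⋃ i ∈ L, Q i, g x ∂μ := by
  obtain ⟨D, hDL, hdisj, -, hunion⟩ := hQ.exists_pairwiseDisjoint_cover L
  have hD : ∀ d ∈ D, ∃ j ∈ L, Q j = d := fun d hd => Finset.mem_image.1 (hDL hd)
  have hDmeas : ∀ d ∈ D, MeasurableSet d := fun d hd => by
    obtain ⟨j, -, rfl⟩ := hD d hd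
    exact hmeas j
  rw [← hunion, measure_biUnion_finset (f := fun d => d) hdisj hDmeas,
    lintegral_biUnion_finset (t := fun d => d) hdisj hDmeas,
    Finset.mul_sum]
  refine Finset.sum_le_sum fun d hd => ?_
  obtain ⟨j, hj, rfl⟩ := hD d hd
  exact hL j hj

end IsLaminar

theorem ENNReal.two_mul_le_add_sq (a b : ℝ≥0∞) : 2 * a * b ≤ a ^ 2 + b ^ 2 := by
  rcases eq_or_ne a ∞ with rfl | ha
  · simp
  rcases eq_or_ne b ∞ with rfl | hb
  · simp
  lift a to NNReal using ha
  lift b to NNReal using hb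
  exact_mod_cast _root_.two_mul_le_add_sq a b

section LayerCake

variable {α : Type*} [MeasurableSpace α] {μ : Measure α} {f : α → ℝ≥0∞}

theorem measure_setOf_lt_toReal_eq (hfin : ∀ᵐ x ∂μ, f x ≠ ∞) {t : ℝ} (ht : 0 ≤ t) :
    μ {x | t < (f x).toReal} = μ {x | ENNReal.ofReal t < f x} := by
  refine measure_congr (hfin.mono fun x hx => ?_)
  simp only [eq_iff_iff]
  exact (ENNReal.ofReal_lt_iff_lt_toReal ht hx).symm

theorem lintegral_eq_lintegral_meas_ofReal_lt (hf : AEMeasurable f μ)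
    (hfin : ∀ᵐ x ∂μ, f x ≠ ∞) :
    ∫⁻ x, f x ∂μ = ∫⁻ t in Ioi 0, μ {x | ENNReal.ofReal t < f x} := by
  have := lintegral_eq_lintegral_meas_lt μ (ae_of_all _ fun x => toReal_nonneg)
    hf.ennreal_toReal
  rw [lintegral_congr_ae (hfin.mono fun x hx => (ofReal_toReal hx).symm), this]
  exact setLIntegral_congr_fun measurableSet_Ioi fun t ht => measure_setOf_lt_toReal_eq hfin ht.le

theorem lintegral_sq_eq_lintegral_meas_ofReal_lt (hf : AEMeasurable f μ)
    (hfin : ∀ᵐ x ∂μ, f x ≠ ∞) :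
    ∫⁻ x, f x ^ 2 ∂μ = 2 * ∫⁻ t in Ioi 0, μ {x | ENNReal.ofReal t < f x} * ENNReal.ofReal t := by
  have := lintegral_rpow_eq_lintegral_meas_lt_mul μ (ae_of_all _ fun x => toReal_nonneg)
    hf.ennreal_toReal two_pos
  simp only [Real.rpow_ofNat, toReal_nonneg, ofReal_pow, ofReal_ofNat,
    show (2:ℝ) - 1 = 1 by norm_num, Real.rpow_one] at this
  rw [lintegral_congr_ae (hfin.mono fun x hx => ?_), this]
  · congr 1
    exact setLIntegral_congr_fun measurableSet_Ioi fun t ht => by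
      rw [measure_setOf_lt_toReal_eq hfin ht.le]
  · simp [ofReal_toReal hx]

theorem lintegral_sq_le_mul_lintegral_sq_of_meas_lt_le {β : Type*} [MeasurableSpace β]
    {ν : Measure β} {h : β → ℝ≥0∞} {K : ℝ≥0∞} (hf : AEMeasurable f μ) (hfin : ∀ᵐ x ∂μ, f x ≠ ∞)
    (hh : AEMeasurable h ν) (hhfin : ∀ᵐ y ∂ν, h y ≠ ∞)
    (hdist : ∀ s, μ {x | s < f x} ≤ K * ν {y | s < h y}) :
    ∫⁻ x, f x ^ 2 ∂μ ≤ K * ∫⁻ y, h y ^ 2 ∂ν := by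
  have hanti : Antitone fun t : ℝ => ν {y | ENNReal.ofReal t < h y} := fun s t hst =>
    measure_mono fun y hy => (ofReal_le_ofReal hst).trans_lt hy
  have hmeas : Measurable fun t : ℝ => ν {y | ENNReal.ofReal t < h y} * ENNReal.ofReal t :=
    hanti.measurable.mul measurable_ofReal
  rw [lintegral_sq_eq_lintegral_meas_ofReal_lt hf hfin,
    lintegral_sq_eq_lintegral_meas_ofReal_lt hh hhfin, mul_left_comm,
    ← lintegral_const_mul _ hmeas]
  refine mul_le_mul' le_rfl (lintegral_mono fun t => ?_)
  rw [← mul_assoc]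
  exact mul_le_mul' (hdist _) le_rfl

theorem lintegral_sq_le_two_mul_lintegral_mul {g : α → ℝ≥0∞} (hf : Measurable f)
    (hfin : ∀ᵐ x ∂μ, f x ≠ ∞) (hg : Measurable g)
    (hweak : ∀ s, s * μ {x | s < f x} ≤ ∫⁻ x in {x | s < f x}, g x ∂μ) :
    ∫⁻ x, f x ^ 2 ∂μ ≤ 2 * ∫⁻ x, g x * f x ∂μ := by
  calc ∫⁻ x, f x ^ 2 ∂μ
      = 2 * ∫⁻ t in Ioi 0, μ {x | ENNReal.ofReal t < f x} * ENNReal.ofReal t :=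
        lintegral_sq_eq_lintegral_meas_ofReal_lt hf.aemeasurable hfin
    _ ≤ 2 * ∫⁻ t in Ioi 0, μ.withDensity g {x | ENNReal.ofReal t < f x} := by
        gcongr with t
        rw [mul_comm, withDensity_apply _ (measurableSet_lt measurable_const hf)]
        exact hweak _
    _ = 2 * ∫⁻ x, f x ∂μ.withDensity g := by
        rw [lintegral_eq_lintegral_meas_ofReal_lt hf.aemeasurable
          ((withDensity_absolutelyContinuous μ g).ae_le hfin)]
    _ = 2 * ∫⁻ x, g x * f x ∂μ := by rw [lintegral_withDensity_eq_lintegral_mul μ hg hf]; rfl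

theorem lintegral_sq_le_four_mul_lintegral_sq {g : α → ℝ≥0∞} (hf : Measurable f)
    (hg : Measurable g) (hfin : ∫⁻ x, f x ^ 2 ∂μ ≠ ∞)
    (hweak : ∀ s, s * μ {x | s < f x} ≤ ∫⁻ x in {x | s < f x}, g x ∂μ) :
    ∫⁻ x, f x ^ 2 ∂μ ≤ 4 * ∫⁻ x, g x ^ 2 ∂μ := by
  have hfin_ae : ∀ᵐ x ∂μ, f x ≠ ∞ := (ae_lt_top (hf.pow_const 2) hfin).mono fun x hx hfx =>
    hx.ne (by simp [hfx])
  refine ENNReal.le_of_add_le_add_left hfin ?_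
  calc ∫⁻ x, f x ^ 2 ∂μ + ∫⁻ x, f x ^ 2 ∂μ
      ≤ 2 * (2 * ∫⁻ x, g x * f x ∂μ) := by
        rw [← two_mul]
        gcongr
        exact lintegral_sq_le_two_mul_lintegral_mul hf hfin_ae hg hweak
    _ = ∫⁻ x, 2 * f x * (2 * g x) ∂μ := by
        rw [← lintegral_const_mul' _ _ ofNat_ne_top, ← lintegral_const_mul' _ _ ofNat_ne_top]
        congr with x
        ring
    _ ≤ ∫⁻ x, f x ^ 2 + (2 * g x) ^ 2 ∂μ := lintegral_mono fun x => ENNReal.two_mul_le_add_sq _ _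
    _ = ∫⁻ x, f x ^ 2 ∂μ + 4 * ∫⁻ x, g x ^ 2 ∂μ := by
        rw [lintegral_add_left (hf.pow_const 2), ← lintegral_const_mul' _ _ ofNat_ne_top]
        congr with x
        ring

end LayerCake

section SupIndicator

variable {ι α : Type*}

noncomputable def supIndicator (F : Finset ι) (Q : ι → Set α) (T : ι → ℝ≥0∞) (x : α) : ℝ≥0∞ :=
  F.sup fun i => (Q i).indicator (fun _ => T i) x

variable {F : Finset ι} {Q : ι → Set α} {T : ι → ℝ≥0∞}

theorem setOf_lt_supIndicator (s : ℝ≥0∞) :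
    {x | s < supIndicator F Q T x} = ⋃ i ∈ F.filter (s < T ·), Q i := by
  ext x
  simp only [supIndicator, mem_ofPred_eq, Finset.lt_sup_iff, mem_iUnion, Finset.mem_filter,
    exists_prop]
  constructor
  · rintro ⟨i, hi, hlt⟩
    by_cases hx : x ∈ Q i
    · exact ⟨i, ⟨hi, by rwa [indicator_of_mem hx] at hlt⟩, hx⟩
    · simp [indicator_of_notMem hx] at hlt
  · rintro ⟨i, ⟨hi, hlt⟩, hx⟩
    exact ⟨i, hi, by rwa [indicator_of_mem hx]⟩

theorem supIndicator_ne_top (hT : ∀ i, T i ≠ ∞) (x : α) : supIndicator F Q T x ≠ ∞ :=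
  ((Finset.sup_lt_iff bot_lt_top).2 fun i _ =>
    (indicator_le_self (Q i) (fun _ => T i) x).trans_lt (hT i).lt_top).ne

variable [MeasurableSpace α] {μ : Measure α}

theorem measurable_supIndicator (hmeas : ∀ i, MeasurableSet (Q i)) :
    Measurable (supIndicator F Q T) := measurable_of_Ioi fun s => by
  change MeasurableSet {x | s < supIndicator F Q T x}
  rw [setOf_lt_supIndicator]
  exact Finset.measurableSet_biUnion _ fun i _ => hmeas i

theorem lintegral_supIndicator_sq_le (hmeas : ∀ i, MeasurableSet (Q i)) :
    ∫⁻ x, supIndicator F Q T x ^ 2 ∂μ ≤ ∑ i ∈ F, T i ^ 2 * μ (Q i) := by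
  calc ∫⁻ x, supIndicator F Q T x ^ 2 ∂μ
      ≤ ∫⁻ x, ∑ i ∈ F, (Q i).indicator (fun _ => T i ^ 2) x ∂μ := by
        refine lintegral_mono fun x => ?_
        rcases F.eq_empty_or_nonempty with rfl | hF
        · simp [supIndicator]
        obtain ⟨i, hi, hsup⟩ := F.exists_mem_eq_sup hF fun i => (Q i).indicator (fun _ => T i) x
        rw [supIndicator, hsup]
        refine le_trans (le_of_eq ?_) (Finset.single_le_sum (fun j _ => zero_le) hi)
        by_cases hx : x ∈ Q i <;> simp [hx]
    _ = ∑ i ∈ F, T i ^ 2 * μ (Q i) := by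
        rw [lintegral_finsetSum _ fun i _ => measurable_const.indicator (hmeas i)]
        simp only [lintegral_indicator_const (hmeas _)]

end SupIndicator

theorem setLAverage_ne_top {α : Type*} [MeasurableSpace α] {μ : Measure α} {g : α → ℝ≥0∞}
    (hg : ∫⁻ x, g x ^ 2 ∂μ ≠ ∞) (s : Set α) : ⨍⁻ x in s, g x ∂μ ≠ ∞ := by
  rcases eq_or_ne (μ s) ∞ with hs | hs
  · simp [setLAverage_eq, hs]
  refine (setLAverage_lt_top (ne_top_of_le_ne_top (add_ne_top.2 ⟨hs, hg⟩) ?_)).ne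
  calc ∫⁻ x in s, g x ∂μ ≤ ∫⁻ x in s, 1 + g x ^ 2 ∂μ := by
        refine lintegral_mono fun x => ?_
        rcases le_total (g x) 1 with h | h
        · exact h.trans le_self_add
        · exact (le_self_pow₀ h two_ne_zero).trans le_add_self
    _ = μ s + ∫⁻ x in s, g x ^ 2 ∂μ := by rw [lintegral_add_left measurable_const]; simp
    _ ≤ μ s + ∫⁻ x, g x ^ 2 ∂μ := add_le_add le_rfl (setLIntegral_le_lintegral _ _)

namespace IsLaminar

variable {ι α : Type*} [MeasurableSpace α] {μ : Measure α} {Q : ι → Set α} {A : ι → ℝ≥0∞}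
  {K : ℝ≥0∞} {g : α → ℝ≥0∞}

theorem sum_mul_sq_le_mul_lintegral_supIndicator_sq (hQ : IsLaminar Q)
    (hmeas : ∀ i, MeasurableSet (Q i))
    (hA : ∀ i, ∑' j, {j | Q j ⊆ Q i}.indicator A j ≤ K * μ (Q i)) {T : ι → ℝ≥0∞}
    (hT : ∀ i, T i ≠ ∞) (F : Finset ι) :
    ∑ i ∈ F, A i * T i ^ 2 ≤ K * ∫⁻ x, supIndicator F Q T x ^ 2 ∂μ := by
  let _ : MeasurableSpace ι := ⊤
  have hsum : ∑ i ∈ F, A i * T i ^ 2 = ∫⁻ i, T i ^ 2 ∂(∑ i ∈ F, A i • Measure.dirac i) := by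
    simp [lintegral_finsetSum_measure, lintegral_smul_measure, lintegral_dirac]
  rw [hsum]
  refine lintegral_sq_le_mul_lintegral_sq_of_meas_lt_le measurable_from_top.aemeasurable
    (ae_of_all _ hT) (measurable_supIndicator hmeas).aemeasurable
    (ae_of_all _ (supIndicator_ne_top hT)) fun s => ?_
  rw [setOf_lt_supIndicator, Measure.finsetSum_apply]
  refine le_trans (le_of_eq ?_) (hQ.sum_le_mul_measure_biUnion hmeas hA _)
  rw [Finset.sum_filter]
  refine Finset.sum_congr rfl fun i _ => ?_
  by_cases h : s < T i <;> simp [h]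

theorem lintegral_supIndicator_setLAverage_sq_le (hQ : IsLaminar Q)
    (hmeas : ∀ i, MeasurableSet (Q i)) (hg : Measurable g) (hG : ∫⁻ x, g x ^ 2 ∂μ ≠ ∞)
    (F : Finset ι) :
    ∫⁻ x, supIndicator F Q (fun i => ⨍⁻ y in Q i, g y ∂μ) x ^ 2 ∂μ ≤
      4 * ∫⁻ x, g x ^ 2 ∂μ := by
  set T : ι → ℝ≥0∞ := fun i => ⨍⁻ y in Q i, g y ∂μ
  have hT : ∀ i, T i ≠ ∞ := fun i => setLAverage_ne_top hG (Q i)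
  have hfin : ∫⁻ x, supIndicator F Q T x ^ 2 ∂μ ≠ ∞ := by
    refine ne_top_of_le_ne_top (sum_ne_top.2 fun i _ => ?_) (lintegral_supIndicator_sq_le hmeas)
    rcases eq_or_ne (T i) 0 with h0 | h0
    · simp [h0]
    -- the average over a set of infinite measure is `0`
    have hμ : μ (Q i) ≠ ∞ := fun htop => h0 (by simp [T, setLAverage_eq, htop])
    exact mul_ne_top (pow_ne_top (hT i)) hμ
  refine lintegral_sq_le_four_mul_lintegral_sq (measurable_supIndicator hmeas) hg hfin fun s => ?_
  rw [setOf_lt_supIndicator]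
  refine hQ.mul_measure_biUnion_le hmeas fun i hi => mul_le_of_le_div ?_
  exact (Finset.mem_filter.1 hi).2.le.trans_eq (setLAverage_eq μ g (Q i))

theorem sum_mul_setLAverage_sq_le (hQ : IsLaminar Q) (hmeas : ∀ i, MeasurableSet (Q i))
    (hA : ∀ i, ∑' j, {j | Q j ⊆ Q i}.indicator A j ≤ K * μ (Q i)) (hg : Measurable g)
    (hG : ∫⁻ x, g x ^ 2 ∂μ ≠ ∞) (F : Finset ι) :
    ∑ i ∈ F, A i * (⨍⁻ x in Q i, g x ∂μ) ^ 2 ≤ 4 * K * ∫⁻ x, g x ^ 2 ∂μ :=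
  calc ∑ i ∈ F, A i * (⨍⁻ x in Q i, g x ∂μ) ^ 2
      ≤ K * ∫⁻ x, supIndicator F Q (fun i => ⨍⁻ y in Q i, g y ∂μ) x ^ 2 ∂μ :=
        hQ.sum_mul_sq_le_mul_lintegral_supIndicator_sq hmeas hA
          (fun i => setLAverage_ne_top hG (Q i)) F
    _ ≤ K * (4 * ∫⁻ x, g x ^ 2 ∂μ) := by
        gcongr
        exact hQ.lintegral_supIndicator_setLAverage_sq_le hmeas hg hG F
    _ = 4 * K * ∫⁻ x, g x ^ 2 ∂μ := by ring

theorem tsum_mul_setLAverage_sq_le (hQ : IsLaminar Q) (hmeas : ∀ i, MeasurableSet (Q i))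
    (hA : ∀ i, ∑' j, {j | Q j ⊆ Q i}.indicator A j ≤ K * μ (Q i)) (hg : Measurable g) :
    ∑' i, A i * (⨍⁻ x in Q i, g x ∂μ) ^ 2 ≤ 4 * K * ∫⁻ x, g x ^ 2 ∂μ := by
  rcases eq_or_ne (∫⁻ x, g x ^ 2 ∂μ) ∞ with hG | hG
  · rcases eq_or_ne K 0 with rfl | hK
    · have hA0 : ∀ i, A i = 0 := fun i => by
        simpa using hQ.sum_le_mul_measure_biUnion hmeas hA {i}
      simp [hA0]
    · simp [hG, hK]
  · rw [ENNReal.tsum_eq_iSup_sum]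
    exact iSup_le (hQ.sum_mul_setLAverage_sq_le hmeas hA hg hG)

end IsLaminar

/-- Dyadic Carleson embedding theorem: if the nonnegative coefficients `a k m`
attached to the dyadic cubes satisfy the Carleson packing condition
`∑_{Q ⊆ R} a_Q ≤ K w(R)` for every dyadic cube `R`, then for every `g`,
`∑_Q a_Q (avg_Q^w g)² ≤ 4 K ‖g‖²_{L²(w)}`. -/
theorem dyadic_carleson_embedding {n : ℕ}
    (w : (Fin n → ℝ) → ℝ≥0∞) (hw : Measurable w)
    (a : ℤ → (Fin n → ℤ) → ℝ≥0∞) (K : ℝ≥0∞)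
    (hCarleson : ∀ (k : ℤ) (m : Fin n → ℤ),
      (∑' (k' : ℤ) (m' : Fin n → ℤ),
          {q : ℤ × (Fin n → ℤ) | dyadicCube q.1 q.2 ⊆ dyadicCube k m}.indicator
            (fun q => a q.1 q.2) (k', m'))
        ≤ K * ∫⁻ x in dyadicCube k m, w x)
    (g : (Fin n → ℝ) → ℝ≥0∞) (hg : Measurable g) :
    (∑' (k : ℤ) (m : Fin n → ℤ),
        a k m *
          ((∫⁻ x in dyadicCube k m, g x * w x) / ∫⁻ x in dyadicCube k m, w x) ^ 2)
      ≤ 4 * K * ∫⁻ x, g x ^ 2 * w x := by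
  set μ := volume.withDensity w
  have hw_cube : ∀ k m, ∫⁻ x in dyadicCube k m, w x = μ (dyadicCube k m) := fun k m =>
    (withDensity_apply w (measurableSet_dyadicCube k m)).symm
  have hgw_cube : ∀ k m, ∫⁻ x in dyadicCube k m, g x * w x = ∫⁻ x in dyadicCube k m, g x ∂μ :=
    fun k m => by
      rw [setLIntegral_withDensity_eq_setLIntegral_mul _ hw hg (measurableSet_dyadicCube k m)]
      simp only [Pi.mul_apply, mul_comm]
  have hgw : ∫⁻ x, g x ^ 2 * w x = ∫⁻ x, g x ^ 2 ∂μ := by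
    rw [lintegral_withDensity_eq_lintegral_mul _ hw (hg.pow_const 2)]
    simp only [Pi.mul_apply, mul_comm]
  have hA : ∀ q : ℤ × (Fin n → ℤ), ∑' q', {q' : ℤ × (Fin n → ℤ) |
      dyadicCube q'.1 q'.2 ⊆ dyadicCube q.1 q.2}.indicator (fun q => a q.1 q.2) q' ≤
        K * μ (dyadicCube q.1 q.2) := fun q => by
    rw [ENNReal.tsum_prod', ← hw_cube]
    exact hCarleson q.1 q.2
  calc _ = ∑' q : ℤ × (Fin n → ℤ), a q.1 q.2 * (⨍⁻ x in dyadicCube q.1 q.2, g x ∂μ) ^ 2 := by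
        rw [← ENNReal.tsum_prod]
        simp only [setLAverage_eq, hgw_cube, hw_cube]
    _ ≤ 4 * K * ∫⁻ x, g x ^ 2 ∂μ := isLaminar_dyadicCube.tsum_mul_setLAverage_sq_le
        (fun q => measurableSet_dyadicCube q.1 q.2) hA hg
    _ = 4 * K * ∫⁻ x, g x ^ 2 * w x := by rw [hgw]
end
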